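/- Consider N_c campaigns with required impressions I_i > 0 and N_r targeting groups with continuous non-decreasing supply curves D_j. Suppose an optimal solution (b*, γ*) to the cost-minimization problem exists. Then for each targeting group j, all campaigns i receiving positive impressions from j (γ*_{i,j}·D_j(b*_{i,j}) > 0) have equal supply values: there exists q*_j with D_j(b*_{i,j}) = D_j(q*_j) for all such i. -/

import Mathlib

/-!
Suppose campaigns `m` and `n` both buy from group `j`, at bids `p` and `s` with
`D p < D s`. Move both to a common bid `q` at which `D q` is the share-weighted average
of `D p` and `D s`, rescaling the shares so that each campaign keeps its impressions; the
rescaled shares still sum to `γ m j + γ n j`. The cost per share `c b = D b * b - ∫₀ᵇ D`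
satisfies `c q - c p < q * (D q - D p)`, the gap being `∫ₚ^q (D u - D p) du > 0`, and
`q * (D s - D q) ≤ c s - c q`. After weighting by the shares the two right-hand sides
agree, so the new allocation is strictly cheaper, contradicting optimality.
-/

open MeasureTheory

noncomputable def bidCost (f : ℝ → ℝ) (b : ℝ) : ℝ := f b * b - ∫ u in (0:ℝ)..b, f u

section BidCost

variable {f : ℝ → ℝ}

open intervalIntegral in
theorem bidCost_sub_bidCost (hf : Monotone f) (p q : ℝ) :
    bidCost f q - bidCost f p = q * (f q - f p) - ∫ u in p..q, (f u - f p) := by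
  have hint : ∀ a c : ℝ, IntervalIntegrable f volume a c := fun _ _ => hf.intervalIntegrable
  rw [integral_sub (hint p q) intervalIntegrable_const, intervalIntegral.integral_const,
    smul_eq_mul, bidCost, bidCost, ← integral_add_adjacent_intervals (hint 0 p) (hint p q)]
  ring

theorem bidCost_sub_lt (hmono : Monotone f) (hcont : Continuous f) {p q : ℝ} (h : f p < f q) :
    bidCost f q - bidCost f p < q * (f q - f p) := by
  have hpos : 0 < ∫ u in p..q, (f u - f p) :=
    intervalIntegral.integral_pos (hmono.reflect_lt h) (by fun_prop)
      (fun u hu => sub_nonneg.2 (hmono hu.1.le))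
      ⟨q, Set.right_mem_Icc.2 (hmono.reflect_lt h).le, sub_pos.2 h⟩
  linarith [bidCost_sub_bidCost hmono p q]

theorem mul_sub_le_bidCost_sub (hf : Monotone f) {q s : ℝ} (h : q ≤ s) :
    q * (f s - f q) ≤ bidCost f s - bidCost f q := by
  have hle : ∫ u in q..s, (f u - f q) ≤ (s - q) * (f s - f q) := by
    simpa [mul_sub] using intervalIntegral.integral_mono_on (μ := volume) h
      (hf.intervalIntegrable.sub intervalIntegrable_const) intervalIntegrable_const
      fun u hu => sub_le_sub_right (hf hu.2) (f q)
  linarith [bidCost_sub_bidCost hf q s]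

theorem add_mul_bidCost_lt (hmono : Monotone f) (hcont : Continuous f) {p q s gm gn : ℝ}
    (hgm : 0 < gm) (hgn : 0 ≤ gn) (hpq : f p < f q) (hqs : q ≤ s)
    (hbal : gm * (f q - f p) = gn * (f s - f q)) :
    (gm + gn) * bidCost f q < gm * bidCost f p + gn * bidCost f s := by
  have h1 := mul_lt_mul_of_pos_left (bidCost_sub_lt hmono hcont hpq) hgm
  have h2 := mul_le_mul_of_nonneg_left (mul_sub_le_bidCost_sub hmono hqs) hgn
  have h3 : gm * (q * (f q - f p)) = gn * (q * (f s - f q)) := by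
    rw [mul_left_comm, hbal, mul_left_comm]
  linarith

theorem exists_bid_mem_Icc_add_mul_eq (hmono : Monotone f) (hcont : Continuous f)
    {p s gm gn : ℝ} (hgm : 0 ≤ gm) (hgn : 0 ≤ gn) (hg : 0 < gm + gn) (hps : p ≤ s) :
    ∃ q ∈ Set.Icc p s, (gm + gn) * f q = gm * f p + gn * f s := by
  obtain ⟨q, hq, hfq⟩ := intermediate_value_Icc hps hcont.continuousOn
    (show (gm * f p + gn * f s) / (gm + gn) ∈ Set.Icc (f p) (f s) from by
      have := hmono hps
      constructor
      · rw [le_div_iff₀ hg]; nlinarith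
      · rw [div_le_iff₀ hg]; nlinarith)
  exact ⟨q, hq, by rw [hfq]; field_simp⟩

end BidCost

section PairUpdate

variable {ι κ β : Type*} [DecidableEq ι] [DecidableEq κ]

def updatePair (x : ι → κ → β) (m n : ι) (j : κ) (xm xn : β) : ι → κ → β :=
  fun i k => if i = m ∧ k = j then xm else if i = n ∧ k = j then xn else x i k

variable {x : ι → κ → β} {m n i : ι} {j k : κ} {xm xn : β}

@[simp]
theorem updatePair_apply_left : updatePair x m n j xm xn m j = xm := by
  simp [updatePair]

@[simp]
theorem updatePair_apply_right (hmn : m ≠ n) : updatePair x m n j xm xn n j = xn := by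
  simp [updatePair, hmn.symm]

theorem updatePair_apply_of_ne (hm : ¬(i = m ∧ k = j)) (hn : ¬(i = n ∧ k = j)) :
    updatePair x m n j xm xn i k = x i k := by
  simp [updatePair, hm, hn]

end PairUpdate

section PairSum

variable {α M : Type*} [DecidableEq α] [AddCommGroup M]

theorem Finset.sum_eq_add_of_eq_off_pair {s : Finset α} {f g : α → M} {a b : α}
    (ha : a ∈ s) (hb : b ∈ s) (hab : a ≠ b) (h : ∀ x ∈ s, x ≠ a → x ≠ b → g x = f x) :
    ∑ x ∈ s, g x = ∑ x ∈ s, f x + (g a - f a) + (g b - f b) := by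
  have hsub : ∑ x ∈ s, (g x - f x) = (g a - f a) + (g b - f b) := by
    rw [← Finset.sum_pair (f := fun x => g x - f x) hab]
    refine (Finset.sum_subset (by simp [Finset.insert_subset_iff, ha, hb]) ?_).symm
    intro x hx hx'
    simp only [Finset.mem_insert, Finset.mem_singleton, not_or] at hx'
    rw [h x hx hx'.1 hx'.2, sub_self]
  rw [Finset.sum_sub_distrib] at hsub
  rw [add_assoc, ← hsub]
  abel

theorem Finset.sum_sum_eq_add_of_eq_off_pair {ι κ : Type*} [Fintype ι] [DecidableEq ι]
    [DecidableEq κ] {t : ι → Finset κ} {w w' : ι → κ → M} {m n : ι} {j : κ}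
    (hm : j ∈ t m) (hn : j ∈ t n) (hmn : m ≠ n)
    (h : ∀ i k, ¬(i = m ∧ k = j) → ¬(i = n ∧ k = j) → w' i k = w i k) :
    ∑ i, ∑ k ∈ t i, w' i k = ∑ i, ∑ k ∈ t i, w i k + (w' m j - w m j) + (w' n j - w n j) := by
  rw [Finset.sum_sigma', Finset.sum_sigma']
  exact Finset.sum_eq_add_of_eq_off_pair (a := (⟨m, j⟩ : (_ : ι) × κ)) (b := ⟨n, j⟩)
    (by simpa using hm) (by simpa using hn) (by simpa using hmn) fun ⟨i, k⟩ _ him hin =>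
      h i k (by simpa using him) (by simpa using hin)

end PairSum

section Allocation

variable {ι κ : Type*} [DecidableEq ι] [DecidableEq κ]

structure IsFeasible (I : ι → ℝ) (A : ι → Finset κ) (B : κ → Finset ι) (D : κ → ℝ → ℝ)
    (b γ : ι → κ → ℝ) : Prop where
  bid_nonneg : ∀ i j, 0 ≤ b i j
  share_nonneg : ∀ i j, 0 ≤ γ i j
  le_impressions : ∀ i, I i ≤ ∑ j ∈ A i, γ i j * D j (b i j)
  sum_share_le_one : ∀ j, ∑ i ∈ B j, γ i j ≤ 1

variable {I : ι → ℝ} {A : ι → Finset κ} {B : κ → Finset ι} {D : κ → ℝ → ℝ} {b γ : ι → κ → ℝ}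
  {m n : ι} {j : κ} {q xm xn : ℝ}

theorem isFeasible_updatePair (hf : IsFeasible I A B D b γ) (hmn : m ≠ n)
    (hmB : m ∈ B j) (hnB : n ∈ B j) (hq : 0 ≤ q) (hxm : 0 ≤ xm) (hxn : 0 ≤ xn)
    (hm : xm * D j q = γ m j * D j (b m j)) (hn : xn * D j q = γ n j * D j (b n j))
    (hsum : xm + xn = γ m j + γ n j) :
    IsFeasible I A B D (updatePair b m n j q q) (updatePair γ m n j xm xn) := by
  refine ⟨fun i k => ?_, fun i k => ?_, fun i => ?_, fun k => ?_⟩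
  · simp only [updatePair]
    split_ifs <;> first | exact hq | exact hf.bid_nonneg i k
  · simp only [updatePair]
    split_ifs <;> first | exact hxm | exact hxn | exact hf.share_nonneg i k
  · have hprod : ∀ k, updatePair γ m n j xm xn i k * D k (updatePair b m n j q q i k) =
        γ i k * D k (b i k) := by
      intro k
      simp only [updatePair]
      split_ifs with him hin
      · obtain ⟨rfl, rfl⟩ := him
        exact hm
      · obtain ⟨rfl, rfl⟩ := hin
        exact hn
      · rfl
    rw [Finset.sum_congr rfl fun k _ => hprod k]
    exact hf.le_impressions i
  · by_cases hk : k = j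
    · subst hk
      rw [Finset.sum_eq_add_of_eq_off_pair hmB hnB hmn
        fun i _ him hin => updatePair_apply_of_ne (fun h => him h.1) (fun h => hin h.1),
        updatePair_apply_left, updatePair_apply_right hmn]
      linarith [hf.sum_share_le_one k]
    · rw [Finset.sum_congr rfl fun i _ =>
        updatePair_apply_of_ne (fun h => hk h.2) (fun h => hk h.2)]
      exact hf.sum_share_le_one k

variable [Fintype ι]

noncomputable def totalCost (A : ι → Finset κ) (D : κ → ℝ → ℝ) (b γ : ι → κ → ℝ) : ℝ :=
  ∑ i, ∑ j ∈ A i, γ i j * bidCost (D j) (b i j)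

theorem totalCost_updatePair (hmA : j ∈ A m) (hnA : j ∈ A n) (hmn : m ≠ n) :
    totalCost A D (updatePair b m n j q q) (updatePair γ m n j xm xn) =
      totalCost A D b γ + (xm + xn) * bidCost (D j) q -
        γ m j * bidCost (D j) (b m j) - γ n j * bidCost (D j) (b n j) := by
  unfold totalCost
  rw [Finset.sum_sum_eq_add_of_eq_off_pair (w := fun i k => γ i k * bidCost (D k) (b i k))
    hmA hnA hmn fun i k him hin => by simp only [updatePair_apply_of_ne him hin]]
  simp only [updatePair_apply_left, updatePair_apply_right hmn]
  ring

theorem IsFeasible.exists_totalCost_lt (hf : IsFeasible I A B D b γ)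
    (hmono : Monotone (D j)) (hcont : Continuous (D j)) (hD : 0 ≤ D j (b m j))
    (hmA : j ∈ A m) (hnA : j ∈ A n) (hmB : m ∈ B j) (hnB : n ∈ B j)
    (hγm : 0 < γ m j) (hγn : 0 < γ n j) (hlt : D j (b m j) < D j (b n j)) :
    ∃ b' γ', IsFeasible I A B D b' γ' ∧ totalCost A D b' γ' < totalCost A D b γ := by
  have hmn : m ≠ n := by rintro rfl; exact hlt.false
  obtain ⟨q, ⟨hpq, hqs⟩, hbal⟩ := exists_bid_mem_Icc_add_mul_eq hmono hcont hγm.le hγn.le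
    (add_pos hγm hγn) (hmono.reflect_lt hlt).le
  have hDq : D j (b m j) < D j q := by nlinarith
  have hDq_pos : 0 < D j q := hD.trans_lt hDq
  have hDn : 0 ≤ D j (b n j) := hD.trans hlt.le
  set xm := γ m j * D j (b m j) / D j q
  set xn := γ n j * D j (b n j) / D j q
  have hsum : xm + xn = γ m j + γ n j := by
    rw [← add_div, div_eq_iff hDq_pos.ne']
    linarith
  refine ⟨_, _, isFeasible_updatePair hf hmn hmB hnB ((hf.bid_nonneg m j).trans hpq)
    (by positivity) (by positivity) (div_mul_cancel₀ _ hDq_pos.ne')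
    (div_mul_cancel₀ _ hDq_pos.ne') hsum, ?_⟩
  rw [totalCost_updatePair hmA hnA hmn, hsum]
  linarith [add_mul_bidCost_lt hmono hcont hγm hγn.le hDq hqs (by linear_combination hbal)]

end Allocation

theorem stmt14_general (Nc Nr : ℕ)
    (I : Fin Nc → ℝ)
    (D : Fin Nr → ℝ → ℝ)
    (hmono : ∀ j, Monotone (D j)) (hcont : ∀ j, Continuous (D j))
    (hnn : ∀ j b, 0 ≤ D j b)
    (A : Fin Nc → Finset (Fin Nr)) (B : Fin Nr → Finset (Fin Nc))
    (hAB : ∀ i j, i ∈ B j ↔ j ∈ A i)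
    (b γ : Fin Nc → Fin Nr → ℝ)
    (hbnn : ∀ i j, 0 ≤ b i j) (hγnn : ∀ i j, 0 ≤ γ i j)
    (hfeas1 : ∀ i, I i ≤ ∑ j ∈ A i, γ i j * D j (b i j))
    (hfeas2 : ∀ j, (∑ i ∈ B j, γ i j) ≤ 1)
    (hopt : ∀ b' γ' : Fin Nc → Fin Nr → ℝ,
      (∀ i j, 0 ≤ b' i j) → (∀ i j, 0 ≤ γ' i j) →
      (∀ i, I i ≤ ∑ j ∈ A i, γ' i j * D j (b' i j)) →
      (∀ j, (∑ i ∈ B j, γ' i j) ≤ 1) →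
      (∑ i, ∑ j ∈ A i, γ i j * (D j (b i j) * b i j - ∫ u in (0:ℝ)..(b i j), D j u)) ≤
        ∑ i, ∑ j ∈ A i, γ' i j * (D j (b' i j) * b' i j - ∫ u in (0:ℝ)..(b' i j), D j u)) :
    ∀ j : Fin Nr, ∃ qstar : ℝ,
      ∀ i ∈ B j, 0 < γ i j * D j (b i j) → D j (b i j) = D j qstar := by
  intro j
  have hf : IsFeasible I A B D b γ := ⟨hbnn, hγnn, hfeas1, hfeas2⟩
  have hmin : ∀ b' γ', IsFeasible I A B D b' γ' → totalCost A D b γ ≤ totalCost A D b' γ' :=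
    fun b' γ' h => hopt b' γ' h.bid_nonneg h.share_nonneg h.le_impressions h.sum_share_le_one
  have hsupply : ∀ m ∈ B j, ∀ n ∈ B j, 0 < γ m j * D j (b m j) → 0 < γ n j * D j (b n j) →
      D j (b n j) ≤ D j (b m j) := by
    intro m hm n hn hmpos hnpos
    by_contra! hlt
    obtain ⟨b', γ', hf', hcost⟩ := hf.exists_totalCost_lt (hmono j) (hcont j) (hnn j _)
      ((hAB m j).1 hm) ((hAB n j).1 hn) hm hn (pos_of_mul_pos_left hmpos (hnn j _))
      (pos_of_mul_pos_left hnpos (hnn j _)) hlt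
    exact (hmin b' γ' hf').not_gt hcost
  by_cases h : ∃ i₀ ∈ B j, 0 < γ i₀ j * D j (b i₀ j)
  · obtain ⟨i₀, hi₀, hpos₀⟩ := h
    exact ⟨b i₀ j, fun i hi hpos =>
      le_antisymm (hsupply i₀ hi₀ i hi hpos₀ hpos) (hsupply i hi i₀ hi₀ hpos hpos₀)⟩
  · exact ⟨0, fun i hi hpos => (h ⟨i, hi, hpos⟩).elim⟩

/-- In an optimal solution of the multi-campaign cost-minimization problem
with continuous non-decreasing supply curves, for each targeting group `j`, all campaigns
receiving positive impressions from `j` attain the same supply value: there is a bid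
`q*_j` with `D_j (b*_{i,j}) = D_j q*_j` for every such campaign `i`. -/
theorem stmt14 (Nc Nr : ℕ)
    (I : Fin Nc → ℝ) (hI : ∀ i, 0 < I i)
    (D : Fin Nr → ℝ → ℝ)
    (hmono : ∀ j, Monotone (D j)) (hcont : ∀ j, Continuous (D j))
    (hnn : ∀ j b, 0 ≤ D j b)
    (A : Fin Nc → Finset (Fin Nr)) (B : Fin Nr → Finset (Fin Nc))
    (hAB : ∀ i j, i ∈ B j ↔ j ∈ A i)
    (b γ : Fin Nc → Fin Nr → ℝ)
    (hbnn : ∀ i j, 0 ≤ b i j) (hγnn : ∀ i j, 0 ≤ γ i j)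
    (hfeas1 : ∀ i, I i ≤ ∑ j ∈ A i, γ i j * D j (b i j))
    (hfeas2 : ∀ j, (∑ i ∈ B j, γ i j) ≤ 1)
    (hopt : ∀ b' γ' : Fin Nc → Fin Nr → ℝ,
      (∀ i j, 0 ≤ b' i j) → (∀ i j, 0 ≤ γ' i j) →
      (∀ i, I i ≤ ∑ j ∈ A i, γ' i j * D j (b' i j)) →
      (∀ j, (∑ i ∈ B j, γ' i j) ≤ 1) →
      (∑ i, ∑ j ∈ A i, γ i j * (D j (b i j) * b i j - ∫ u in (0:ℝ)..(b i j), D j u)) ≤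
        ∑ i, ∑ j ∈ A i, γ' i j * (D j (b' i j) * b' i j - ∫ u in (0:ℝ)..(b' i j), D j u)) :
    ∀ j : Fin Nr, ∃ qstar : ℝ,
      ∀ i ∈ B j, 0 < γ i j * D j (b i j) → D j (b i j) = D j qstar :=
  stmt14_general Nc Nr I D hmono hcont hnn A B hAB b γ hbnn hγnn hfeas1 hfeas2 hopt
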